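/- Let R be a commutative ring and let a, b, u, v ∈ R satisfy a·b = 0 and u·a + v·b = 1. Fix a monomial order on R[x₁,…,xₛ]. Let g_a, g_b ∈ R[x₁,…,xₛ] be nonzero polynomials such that lc(g_a) divides a, lc(g_a) ∉ aR, lc(g_b) divides b, and lc(g_b) ∉ bR. Put δ = lm(g_a) ⊔ lm(g_b) (componentwise maximum of exponent vectors) and define f = u·a·lc(g_a)·X^{δ − lm(g_b)}·g_b + v·b·lc(g_b)·X^{δ − lm(g_a)}·g_a. Then f ≠ 0, lm(f) = δ, and lc(f) = lc(g_a)·lc(g_b); that is, the leading term of f is lc(g_a)·lc(g_b)·X^{δ}. -/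

import Mathlib

open MvPolynomial

/-- The leading monomial (largest exponent vector of the support) of a multivariate
polynomial with respect to a monomial order. -/
noncomputable def MonomialOrder.lm {σ R : Type*} [CommSemiring R] (m : MonomialOrder σ)
    (f : MvPolynomial σ R) : σ →₀ ℕ :=
  m.toSyn.symm (f.support.sup fun d => m.toSyn d)

/-- The leading coefficient of a multivariate polynomial with respect to a monomial order. -/
noncomputable def MonomialOrder.lc {σ R : Type*} [CommSemiring R] (m : MonomialOrder σ)
    (f : MvPolynomial σ R) : R :=
  f.coeff (m.lm f)

/-! The two summands of `f` have leading monomials at most `δ`, and their coefficients at `δ` add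
up to `lc(g_a)·lc(g_b)·(u·a + v·b) = lc(g_a)·lc(g_b)`. This product is nonzero: otherwise
`lc(g_a)·b = 0`, since `lc(g_b) ∣ b`, and then `lc(g_a) = u·a·lc(g_a) ∈ aR`. -/

theorem mul_ne_zero_of_notMem_span_singleton {R : Type*} [CommRing R] {a b u v c d : R}
    (huv : u * a + v * b = 1) (hd : d ∣ b) (hc : c ∉ Ideal.span ({a} : Set R)) :
    c * d ≠ 0 := by
  intro hcd
  obtain ⟨e, rfl⟩ := hd
  have hcb : c * (d * e) = 0 := by rw [← mul_assoc, hcd, zero_mul]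
  exact hc (Ideal.mem_span_singleton'.mpr ⟨u * c, by linear_combination c * huv - v * hcb⟩)

namespace MonomialOrder

variable {σ R : Type*} [CommSemiring R] {m : MonomialOrder σ}

theorem degree_eq_of_le_of_coeff_ne_zero {f : MvPolynomial σ R} {d : σ →₀ ℕ}
    (hle : m.degree f ≼[m] d) (hd : f.coeff d ≠ 0) : m.degree f = d :=
  m.toSyn.injective (le_antisymm hle (m.le_degree (mem_support_iff.mpr hd)))

theorem degree_monomial_tsub_mul_le {g : MvPolynomial σ R} {δ : σ →₀ ℕ}
    (hg : m.degree g ≤ δ) (c : R) :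
    m.degree (monomial (δ - m.degree g) c * g) ≼[m] δ :=
  calc m.toSyn (m.degree (monomial (δ - m.degree g) c * g))
      ≤ m.toSyn (m.degree (monomial (δ - m.degree g) c)) + m.toSyn (m.degree g) :=
        degree_mul_le.trans_eq (map_add _ _ _)
    _ ≤ m.toSyn (δ - m.degree g) + m.toSyn (m.degree g) := by gcongr; exact degree_monomial_le c
    _ = m.toSyn δ := by rw [← map_add, tsub_add_cancel_of_le hg]

theorem coeff_monomial_tsub_mul {g : MvPolynomial σ R} {δ : σ →₀ ℕ}
    (hg : m.degree g ≤ δ) (c : R) :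
    (monomial (δ - m.degree g) c * g).coeff δ = c * m.leadingCoeff g := by
  have := coeff_monomial_mul (m.degree g) (δ - m.degree g) c g
  rwa [tsub_add_cancel_of_le hg] at this

theorem leadingTerm_shift_add_shift {f g : MvPolynomial σ R} {δ : σ →₀ ℕ}
    (hf : m.degree f ≤ δ) (hg : m.degree g ≤ δ) {c d : R}
    (hcd : c * m.leadingCoeff g + d * m.leadingCoeff f ≠ 0) :
    let h := monomial (δ - m.degree g) c * g + monomial (δ - m.degree f) d * f
    h ≠ 0 ∧ m.degree h = δ ∧ m.leadingCoeff h = c * m.leadingCoeff g + d * m.leadingCoeff f := by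
  intro h
  have hcoeff : h.coeff δ = c * m.leadingCoeff g + d * m.leadingCoeff f := by
    rw [coeff_add, coeff_monomial_tsub_mul hg, coeff_monomial_tsub_mul hf]
  have hle : m.degree h ≼[m] δ :=
    degree_add_le.trans (sup_le (degree_monomial_tsub_mul_le hg c)
      (degree_monomial_tsub_mul_le hf d))
  have hdeg : m.degree h = δ := degree_eq_of_le_of_coeff_ne_zero hle (hcoeff ▸ hcd)
  exact ⟨ne_zero_iff.mpr ⟨δ, hcoeff ▸ hcd⟩, hdeg, by rw [leadingCoeff, hdeg, hcoeff]⟩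

end MonomialOrder

theorem leadTerm_recombination_general {σ R : Type*} [CommRing R]
    (m : MonomialOrder σ) (a b u v : R) (huv : u * a + v * b = 1)
    (ga gb : MvPolynomial σ R)
    (h2 : m.lc ga ∉ Ideal.span ({a} : Set R))
    (h3 : m.lc gb ∣ b) :
    let δ := m.lm ga ⊔ m.lm gb
    let f := monomial (δ - m.lm gb) (u * a * m.lc ga) * gb
           + monomial (δ - m.lm ga) (v * b * m.lc gb) * ga
    f ≠ 0 ∧ m.lm f = δ ∧ m.lc f = m.lc ga * m.lc gb := by
  intro δ f
  have hlc : u * a * m.lc ga * m.lc gb + v * b * m.lc gb * m.lc ga = m.lc ga * m.lc gb := by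
    linear_combination m.lc ga * m.lc gb * huv
  have hne := mul_ne_zero_of_notMem_span_singleton huv h3 h2
  -- `lm` and `lc` unfold to Mathlib's `degree` and `leadingCoeff`
  obtain ⟨hf0, hdeg, hlead⟩ := MonomialOrder.leadingTerm_shift_add_shift (m := m)
    (le_sup_left : m.lm ga ≤ δ) le_sup_right (hlc ▸ hne)
  exact ⟨hf0, hdeg, hlead.trans hlc⟩

/-- The leading term of the recombined polynomial: if `a·b = 0`, `u·a + v·b = 1`,
`lc(g_a) ∣ a`, `lc(g_a) ∉ aR`, `lc(g_b) ∣ b`, `lc(g_b) ∉ bR`, then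
`f = u·a·lc(g_a)·X^{δ−lm(g_b)}·g_b + v·b·lc(g_b)·X^{δ−lm(g_a)}·g_a` is nonzero with
leading monomial `δ = lm(g_a) ⊔ lm(g_b)` and leading coefficient `lc(g_a)·lc(g_b)`. -/
theorem leadTerm_recombination {σ R : Type*} [CommRing R] [Finite σ]
    (m : MonomialOrder σ) (a b u v : R) (hab : a * b = 0) (huv : u * a + v * b = 1)
    (ga gb : MvPolynomial σ R) (hga : ga ≠ 0) (hgb : gb ≠ 0)
    (h1 : m.lc ga ∣ a) (h2 : m.lc ga ∉ Ideal.span ({a} : Set R))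
    (h3 : m.lc gb ∣ b) (h4 : m.lc gb ∉ Ideal.span ({b} : Set R)) :
    let δ := m.lm ga ⊔ m.lm gb
    let f := monomial (δ - m.lm gb) (u * a * m.lc ga) * gb
           + monomial (δ - m.lm ga) (v * b * m.lc gb) * ga
    f ≠ 0 ∧ m.lm f = δ ∧ m.lc f = m.lc ga * m.lc gb :=
  leadTerm_recombination_general m a b u v huv ga gb h2 h3
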